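/- arXiv:2212.11690 — 2 statements merged into one kernel-verified Lean document; each statement's English description precedes it below -/
import Mathlib

section
/- If f : [0,1] → ℝ is a monotonically increasing concave function with f(0) = 0, and nonnegative reals y₁, ..., yₙ in [0,1] satisfy the polygon inequality yᵢ ≤ Σ_{j≠i} yⱼ for each i, then f(y₁), ..., f(yₙ) also satisfy the polygon inequality f(yᵢ) ≤ Σ_{j≠i} f(yⱼ) for each i. -/
theorem polygon_inequality_preserved
    (n : ℕ) (f : ℝ → ℝ) (y : Fin n → ℝ)
    (hmono : ∀ x z : ℝ, x ∈ Set.Icc (0:ℝ) 1 → z ∈ Set.Icc (0:ℝ) 1 → x ≤ z → f x ≤ f z)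
    (hconc : ConcaveOn ℝ (Set.Icc (0:ℝ) 1) f)
    (hf0 : f 0 = 0)
    (hy : ∀ i, y i ∈ Set.Icc (0:ℝ) 1)
    (hpoly : ∀ i, y i ≤ ∑ j ∈ Finset.univ.erase i, y j) :
    ∀ i, f (y i) ≤ ∑ j ∈ Finset.univ.erase i, f (y j) := by
  intro i
  set S := ∑ j ∈ Finset.univ.erase i, y j with hS
  have hy0 : ∀ j, 0 ≤ y j := fun j => (hy j).1
  have hy1 : ∀ j, y j ≤ 1 := fun j => (hy j).2
  have hS0 : 0 ≤ S := Finset.sum_nonneg fun j _ => hy0 j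
  rcases eq_or_lt_of_le hS0 with hS0' | hSpos
  · have hyi : y i = 0 := le_antisymm (by rw [hS0']; exact hpoly i) (hy0 i)
    have hz : ∀ j ∈ Finset.univ.erase i, y j = 0 := by
      intro j hj
      exact (Finset.sum_eq_zero_iff_of_nonneg (fun j _ => hy0 j)).mp hS0'.symm j hj
    rw [hyi, hf0, Finset.sum_congr rfl (fun j hj => by rw [hz j hj, hf0])]
    simp
  · have hiS : y i ≤ S := hpoly i
    have key : ∀ j ∈ Finset.univ.erase i, (y j / S) * f (y i) ≤ f (y j) := by
      intro j hj
      set t := y j / S with ht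
      have hjS : y j ≤ S := Finset.single_le_sum (fun k _ => hy0 k) hj
      have ht0 : 0 ≤ t := div_nonneg (hy0 j) hS0
      have ht1 : t ≤ 1 := div_le_one_of_le₀ hjS hS0
      have hty : t * y i ≤ y j := by
        rw [ht, div_mul_eq_mul_div, div_le_iff₀ hSpos]
        exact mul_le_mul_of_nonneg_left hiS (hy0 j)
      have hmem : t * y i ∈ Set.Icc (0:ℝ) 1 :=
        ⟨mul_nonneg ht0 (hy0 i), le_trans hty (hy1 j)⟩
      have hconc' := hconc.2 (hy i) (Set.mem_Icc.mpr ⟨le_refl 0, zero_le_one⟩)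
        ht0 (sub_nonneg.mpr ht1) (by ring)
      simp only [smul_eq_mul, hf0, mul_zero, add_zero, mul_zero] at hconc'
      calc t * f (y i) ≤ f (t * y i) := hconc'
        _ ≤ f (y j) := hmono _ _ hmem (hy j) hty
    calc f (y i) = ∑ j ∈ Finset.univ.erase i, (y j / S) * f (y i) := by
          rw [← Finset.sum_mul, ← Finset.sum_div, ← hS, div_self hSpos.ne', one_mul]
      _ ≤ ∑ j ∈ Finset.univ.erase i, f (y j) := Finset.sum_le_sum key
end

section
/- Strict inequality in the generalized polygon relation: let y : Fin 4 → [0,1] and define c i = y i * (2 - y i). Suppose c 0 = c 1 + c 2 + c 3 with at least two of c 1, c 2, c 3 strictly positive, and each cᵢ < c 0 for i = 1,2,3. Then, using monotonicity of c ↦ (1-√(1-c))/c, one deduces y 1 + y 2 + y 3 < y 0, contradicting the polygon inequality y 0 ≤ y 1 + y 2 + y 3; hence no such configuration exists. -/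
private lemma aux_no_degenerate (a b c d : ℝ)
    (ha0 : 0 ≤ a) (ha1 : a ≤ 1) (hb1 : b ≤ 1) (hc1 : c ≤ 1)
    (hd0 : 0 ≤ d) (hd1 : d ≤ 1)
    (hpoly : a ≤ b + c + d)
    (hsum : a * (2 - a) = b * (2 - b) + c * (2 - c) + d * (2 - d))
    (hb : 0 < b) (hc : 0 < c) : False := by
  have hP : 0 < 2 * (b*c + b*d + c*d) := by
    nlinarith [mul_pos hb hc, mul_nonneg hb.le hd0, mul_nonneg hc.le hd0]
  have hs : 1 < b + c + d := by
    by_contra h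
    push_neg at h
    nlinarith [mul_nonneg (sub_nonneg.2 hpoly) (by linarith : (0:ℝ) ≤ 2 - a - (b+c+d))]
  have hs2 : 2 < a + (b + c + d) := by
    by_contra h
    push_neg at h
    nlinarith [mul_nonneg (sub_nonneg.2 hpoly) (by linarith : (0:ℝ) ≤ 2 - a - (b+c+d))]
  have h2P : 2 * (b*c + b*d + c*d) ≤ (b + c + d - 1)^2 := by
    nlinarith [sq_nonneg (1 - a), mul_nonneg (sub_nonneg.2 hpoly) (by linarith : (0:ℝ) ≤ a + (b+c+d) - 2)]
  have hkey : (b + c + d - 1)^2 < 2*(b*c + b*d + c*d) := by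
    nlinarith [mul_pos hb hc, mul_nonneg hb.le hd0, mul_nonneg hc.le hd0,
      mul_nonneg (sub_nonneg.2 hb1) (sub_nonneg.2 hc1),
      mul_nonneg (sub_nonneg.2 hb1) (sub_nonneg.2 hd1),
      mul_nonneg (sub_nonneg.2 hc1) (sub_nonneg.2 hd1),
      mul_pos (mul_pos hb hc) (sub_pos.2 hs),
      mul_nonneg (mul_nonneg (sub_nonneg.2 hd1) hb.le) hc.le]
  linarith

theorem no_degenerate_polygon_configuration (y : Fin 4 → ℝ)
    (hy : ∀ i, y i ∈ Set.Icc (0:ℝ) 1)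
    (hpoly : y 0 ≤ y 1 + y 2 + y 3)
    (hsum : y 0 * (2 - y 0) = y 1 * (2 - y 1) + y 2 * (2 - y 2) + y 3 * (2 - y 3))
    (hpos : (0 < y 1 * (2 - y 1) ∧ 0 < y 2 * (2 - y 2)) ∨
            (0 < y 1 * (2 - y 1) ∧ 0 < y 3 * (2 - y 3)) ∨
            (0 < y 2 * (2 - y 2) ∧ 0 < y 3 * (2 - y 3))) :
    False := by
  obtain ⟨h0l, h0u⟩ := hy 0
  obtain ⟨h1l, h1u⟩ := hy 1
  obtain ⟨h2l, h2u⟩ := hy 2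
  obtain ⟨h3l, h3u⟩ := hy 3
  rcases hpos with ⟨ha, hb⟩ | ⟨ha, hb⟩ | ⟨ha, hb⟩
  · have q1 : 0 < y 1 := by nlinarith
    have q2 : 0 < y 2 := by nlinarith
    exact aux_no_degenerate (y 0) (y 1) (y 2) (y 3) h0l h0u h1u h2u h3l h3u
      (by linarith) (by linarith) q1 q2
  · have q1 : 0 < y 1 := by nlinarith
    have q2 : 0 < y 3 := by nlinarith
    exact aux_no_degenerate (y 0) (y 1) (y 3) (y 2) h0l h0u h1u h3u h2l h2u
      (by linarith) (by linarith) q1 q2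
  · have q1 : 0 < y 2 := by nlinarith
    have q2 : 0 < y 3 := by nlinarith
    exact aux_no_degenerate (y 0) (y 2) (y 3) (y 1) h0l h0u h2u h3u h1l h1u
      (by linarith) (by linarith) q1 q2
end
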